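/- A p-robust random 0–1 matrix has a perfect matching with high probability: let n ≥ 1, p ∈ (0,1), and let Y = [ξ_{ij}] be a random n×n matrix with entries in {0,1}, drawn from an arbitrary joint distribution, which is p-robust: for every entry (i,j) and every assignment of values a ∈ {0,1} to any collection of entries preceding (i,j) in row-major order (an entry (i',j') precedes (i,j) if i' < i, or i' = i and j' < j) that has positive probability, Pr(ξ_{ij} = 1 | those preceding entries take the values a) ≥ p, and also unconditionally Pr(ξ_{ij} = 1) ≥ p. Then Pr(there exists a permutation σ of {1,…,n} with ξ_{σ(j),j} = 1 for all j) ≥ 1 − (n+1)³·(1−p)^{⌊n/2⌋}. -/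

import Mathlib

/-!
If the matrix has no perfect matching then, by Hall's theorem, some `a × b` block of it with
`a + b = n + 1` is identically zero. Conditioning entry by entry in row-major order, robustness
makes any fixed set of `k` entries all zero with probability at most `(1 - p) ^ k`. A union bound
over the blocks finishes the proof: a block with `s = min a b` has `ab ≥ s ⌊n/2⌋` cells, and
there are at most `n ^ (2s)` blocks of its shape, so each shape contributes at most
`(n² (1 - p) ^ ⌊n/2⌋) ^ s ≤ n² (1 - p) ^ ⌊n/2⌋`, unless the claimed bound is vacuous anyway.
-/

open MeasureTheory Finset

open scoped ENNReal

theorem measure_compl_inter_le_of_mul_le {Ω : Type*} [MeasurableSpace Ω] {μ : Measure Ω}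
    [IsFiniteMeasure μ] {A B : Set Ω} {r : ℝ≥0∞} (hA : MeasurableSet A)
    (h : r * μ B ≤ μ (A ∩ B)) : μ (Aᶜ ∩ B) ≤ (1 - r) * μ B := by
  have hsplit : μ (Aᶜ ∩ B) = μ B - μ (A ∩ B) := by
    rw [← measure_inter_add_sdiff B hA, Set.inter_comm B A,
      ENNReal.add_sub_cancel_left (measure_ne_top μ _), Set.sdiff_eq, Set.inter_comm]
  calc μ (Aᶜ ∩ B) = μ B - μ (A ∩ B) := hsplit
    _ ≤ μ B - r * μ B := tsub_le_tsub_left h _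
    _ = (1 - r) * μ B := by rw [ENNReal.sub_mul fun _ _ => measure_ne_top μ B, one_mul]

section Robust

variable {Ω ι : Type*} [MeasurableSpace Ω] [LinearOrder ι]

def IsRobust (μ : Measure Ω) (X : ι → Ω → Bool) (r : ℝ≥0∞) : Prop :=
  ∀ i (T : Finset ι), (∀ j ∈ T, j < i) → ∀ a : ι → Bool,
    μ {ω | ∀ j ∈ T, X j ω = a j} ≠ 0 →
      r * μ {ω | ∀ j ∈ T, X j ω = a j} ≤
        μ ({ω | X i ω = true} ∩ {ω | ∀ j ∈ T, X j ω = a j})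

theorem IsRobust.measure_forall_eq_false_le {μ : Measure Ω} [IsProbabilityMeasure μ]
    {X : ι → Ω → Bool} {r : ℝ≥0∞} (hX : IsRobust μ X r) (hXm : ∀ i, Measurable (X i))
    (S : Finset ι) : μ {ω | ∀ i ∈ S, X i ω = false} ≤ (1 - r) ^ #S := by
  induction S using Finset.induction_on_max with
  | empty => simp
  | insert i S hlt ih =>
    set B := {ω | ∀ j ∈ S, X j ω = false}
    have hstep : r * μ B ≤ μ ({ω | X i ω = true} ∩ B) := by
      by_cases h0 : μ B = 0
      · simp [h0]
      · exact hX i S hlt (fun _ => false) h0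
    calc μ {ω | ∀ j ∈ insert i S, X j ω = false} = μ ({ω | X i ω = true}ᶜ ∩ B) := by
          congr 1; ext ω; simp [B]
      _ ≤ (1 - r) * μ B :=
          measure_compl_inter_le_of_mul_le (hXm i (measurableSet_singleton true)) hstep
      _ ≤ (1 - r) * (1 - r) ^ #S := by gcongr
      _ = (1 - r) ^ #(insert i S) := by
          rw [card_insert_of_notMem fun h => lt_irrefl i (hlt i h), pow_succ']

end Robust

theorem exists_block_of_not_exists_perm {α : Type*} [Fintype α] (R : α → α → Prop)
    (h : ¬ ∃ σ : Equiv.Perm α, ∀ j, R (σ j) j) :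
    ∃ A B : Finset α, #A + #B = Fintype.card α + 1 ∧ ∀ i ∈ A, ∀ j ∈ B, ¬ R i j := by
  classical
  set N : α → Finset α := fun j => univ.filter (R · j)
  obtain ⟨B, hB⟩ : ∃ B : Finset α, #(B.biUnion N) < #B := by
    by_contra! hall
    obtain ⟨f, hf, hfN⟩ := (all_card_le_biUnion_card_iff_exists_injective N).mp hall
    exact h ⟨Equiv.ofBijective f hf.bijective_of_finite, fun j => (mem_filter.mp (hfN j)).2⟩
  have hBcard := card_le_univ B
  obtain ⟨A, hA, hAcard⟩ := exists_subset_card_eq (s := (B.biUnion N)ᶜ)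
    (n := Fintype.card α + 1 - #B) (by rw [card_compl]; omega)
  refine ⟨A, B, by omega, fun i hi j hj hR => ?_⟩
  exact mem_compl.mp (hA hi) (mem_biUnion.mpr ⟨j, hj, mem_filter.mpr ⟨mem_univ i, hR⟩⟩)

theorem measure_not_exists_perm_le {α : Type*} [Fintype α] [LinearOrder α]
    {μ : Measure (α → α → Bool)} [IsProbabilityMeasure μ] {r : ℝ≥0∞}
    (hμ : IsRobust μ (fun (x : α ×ₗ α) ω => ω (ofLex x).1 (ofLex x).2) r) :
    μ {ω | ∃ σ : Equiv.Perm α, ∀ j, ω (σ j) j = true}ᶜ ≤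
      ∑ a ∈ Icc 1 (Fintype.card α),
        ((Fintype.card α).choose a * (Fintype.card α).choose (Fintype.card α + 1 - a) :
          ℝ≥0∞) * (1 - r) ^ (a * (Fintype.card α + 1 - a)) := by
  set n := Fintype.card α
  let blocks (a : ℕ) : Finset (Finset α × Finset α) :=
    powersetCard a univ ×ˢ powersetCard (n + 1 - a) univ
  let zeroOn (AB : Finset α × Finset α) : Set (α → α → Bool) :=
    {ω | ∀ i ∈ AB.1, ∀ j ∈ AB.2, ω i j = false}
  have hcover : {ω | ∃ σ : Equiv.Perm α, ∀ j, ω (σ j) j = true}ᶜ ⊆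
      ⋃ a ∈ Icc 1 n, ⋃ AB ∈ blocks a, zeroOn AB := by
    intro ω hω
    obtain ⟨A, B, hcard, hzero⟩ := exists_block_of_not_exists_perm (ω · · = true) hω
    have hA := card_le_univ A
    have hB := card_le_univ B
    simp only [Set.mem_iUnion, mem_Icc]
    refine ⟨#A, by omega, (A, B), by simp [blocks]; omega, fun i hi j hj => ?_⟩
    simpa using hzero i hi j hj
  have hzeroOn (a : ℕ) (AB) (hAB : AB ∈ blocks a) :
      μ (zeroOn AB) ≤ (1 - r) ^ (a * (n + 1 - a)) := by
    simp only [blocks, mem_product, mem_powersetCard] at hAB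
    have := hμ.measure_forall_eq_false_le (by fun_prop) ((AB.1 ×ˢ AB.2).map toLex.toEmbedding)
    rw [card_map, card_product, hAB.1.2, hAB.2.2] at this
    convert this using 2
    ext ω
    simp only [zeroOn, Set.mem_ofPred_eq, mem_map, mem_product, Equiv.coe_toEmbedding]
    exact ⟨fun h x ⟨y, hy, hyx⟩ => hyx ▸ h _ hy.1 _ hy.2,
      fun h i hi j hj => h (toLex (i, j)) ⟨_, ⟨hi, hj⟩, rfl⟩⟩
  calc μ {ω | ∃ σ : Equiv.Perm α, ∀ j, ω (σ j) j = true}ᶜ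
      ≤ ∑ a ∈ Icc 1 n, ∑ AB ∈ blocks a, μ (zeroOn AB) := by
        refine (measure_mono hcover).trans ((measure_biUnion_finset_le _ _).trans ?_)
        exact sum_le_sum fun a _ => measure_biUnion_finset_le _ _
    _ ≤ ∑ a ∈ Icc 1 n, ∑ AB ∈ blocks a, (1 - r) ^ (a * (n + 1 - a)) := by
        gcongr with a _ AB hAB
        exact hzeroOn a AB hAB
    _ = _ := by simp [blocks, n]

theorem Nat.choose_le_pow_min {n a b : ℕ} (hab : a + b = n + 1) : n.choose a ≤ n ^ min a b := by
  rcases le_total a b with h | h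
  · rw [min_eq_left h]; exact n.choose_le_pow a
  · rw [min_eq_right h]
    rcases Nat.eq_zero_or_pos b with rfl | hb
    · exact (Nat.choose_eq_zero_of_lt (by omega)).trans_le (Nat.zero_le _)
    calc n.choose a = n.choose (b - 1) := Nat.choose_symm_of_eq_add (by omega)
      _ ≤ n ^ (b - 1) := n.choose_le_pow _
      _ ≤ n ^ b := Nat.pow_le_pow_right (by omega) (by omega)

theorem choose_mul_choose_mul_pow_le {n a b : ℕ} (hab : a + b = n + 1) (ha : 1 ≤ a)
    (hb : 1 ≤ b) {q : ℝ} (hq0 : 0 ≤ q) (hq1 : q ≤ 1) (hsmall : (n : ℝ) ^ 2 * q ^ (n / 2) ≤ 1) :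
    (n.choose a * n.choose b : ℝ) * q ^ (a * b) ≤ n ^ 2 * q ^ (n / 2) := by
  set s := min a b
  have hexp : n / 2 * s ≤ a * b := by
    rw [← min_mul_max a b, mul_comm]
    exact Nat.mul_le_mul_left _ (by omega)
  have hca : (n.choose a : ℝ) ≤ n ^ s := by exact_mod_cast Nat.choose_le_pow_min hab
  have hcb : (n.choose b : ℝ) ≤ n ^ s := by
    have := Nat.choose_le_pow_min (n := n) (a := b) (b := a) (by omega)
    rw [min_comm] at this
    exact_mod_cast this
  calc (n.choose a * n.choose b : ℝ) * q ^ (a * b)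
      ≤ (n ^ s * n ^ s) * (q ^ (n / 2)) ^ s := by
        rw [← pow_mul]
        have hcc : (n.choose a * n.choose b : ℝ) ≤ n ^ s * n ^ s := by gcongr
        exact mul_le_mul hcc (pow_le_pow_of_le_one hq0 hq1 hexp) (by positivity) (by positivity)
    _ = (n ^ 2 * q ^ (n / 2)) ^ s := by ring
    _ ≤ n ^ 2 * q ^ (n / 2) := pow_le_of_le_one (by positivity) hsmall (by omega)

theorem sum_choose_mul_choose_mul_pow_le (n : ℕ) {q : ℝ} (hq0 : 0 ≤ q) (hq1 : q ≤ 1)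
    (hsmall : (n : ℝ) ^ 2 * q ^ (n / 2) ≤ 1) :
    ∑ a ∈ Icc 1 n, (n.choose a * n.choose (n + 1 - a) : ℝ) * q ^ (a * (n + 1 - a)) ≤
      (n + 1) ^ 3 * q ^ (n / 2) := by
  calc _ ≤ ∑ a ∈ Icc 1 n, (n : ℝ) ^ 2 * q ^ (n / 2) := by
        refine sum_le_sum fun a ha => ?_
        rw [mem_Icc] at ha
        exact choose_mul_choose_mul_pow_le (by omega) ha.1 (by omega) hq0 hq1 hsmall
    _ = n ^ 3 * q ^ (n / 2) := by simp; ring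
    _ ≤ (n + 1) ^ 3 * q ^ (n / 2) := by gcongr; linarith

theorem ofReal_one_sub_le_of_measure_compl_le {Ω : Type*} [MeasurableSpace Ω] {μ : Measure Ω}
    [IsProbabilityMeasure μ] {s : Set Ω} {x : ℝ} (hs : MeasurableSet s) (hx : 0 ≤ x)
    (h : μ sᶜ ≤ ENNReal.ofReal x) : ENNReal.ofReal (1 - x) ≤ μ s := by
  rw [ENNReal.ofReal_sub _ hx, ENNReal.ofReal_one,
    ← ENNReal.sub_sub_cancel ENNReal.one_ne_top (prob_le_one (s := s)),
    ← prob_compl_eq_one_sub hs]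
  gcongr

theorem probust_matrix_pm_probability_general
    (n : ℕ) (p : ℝ) (hp0 : 0 < p) (hp1 : p < 1)
    (μ : Measure (Fin n → Fin n → Bool)) [IsProbabilityMeasure μ]
    -- `μ` is `p`-robust (row-major precedence)
    (hrob : ∀ (i j : Fin n) (T : Finset (Fin n × Fin n)),
      (∀ q ∈ T, q.1 < i ∨ (q.1 = i ∧ q.2 < j)) →
      ∀ a : Fin n × Fin n → Bool,
        μ {ω | ∀ q ∈ T, ω q.1 q.2 = a q} ≠ 0 →
        ENNReal.ofReal p * μ {ω | ∀ q ∈ T, ω q.1 q.2 = a q} ≤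
          μ ({ω | ω i j = true} ∩ {ω | ∀ q ∈ T, ω q.1 q.2 = a q})) :
    ENNReal.ofReal (1 - ((n : ℝ) + 1) ^ 3 * (1 - p) ^ (n / 2)) ≤
      μ {ω | ∃ σ : Equiv.Perm (Fin n), ∀ j, ω (σ j) j = true} := by
  set q := 1 - p
  have hq0 : 0 ≤ q := by linarith
  have hq1 : q ≤ 1 := by linarith
  by_cases hsmall : (n : ℝ) ^ 2 * q ^ (n / 2) ≤ 1
  swap
  · refine (ENNReal.ofReal_eq_zero.mpr ?_).trans_le zero_le
    have hcube : (n : ℝ) ^ 2 ≤ (n + 1) ^ 3 := by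
      nlinarith [sq_nonneg (n : ℝ), n.cast_nonneg (α := ℝ)]
    nlinarith [pow_nonneg hq0 (n / 2)]
  have hrobust : IsRobust μ (fun (x : Fin n ×ₗ Fin n) ω => ω (ofLex x).1 (ofLex x).2)
      (ENNReal.ofReal p) := fun i T hT => hrob _ _ T fun x hx => Prod.Lex.lt_iff.mp (hT x hx)
  refine ofReal_one_sub_le_of_measure_compl_le .of_discrete (by positivity) ?_
  calc _ ≤ _ := measure_not_exists_perm_le hrobust
    _ = ENNReal.ofReal (∑ a ∈ Icc 1 n, (n.choose a * n.choose (n + 1 - a) : ℝ) *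
          q ^ (a * (n + 1 - a))) := by
        rw [ENNReal.ofReal_sum_of_nonneg fun _ _ => by positivity, Fintype.card_fin]
        refine sum_congr rfl fun a _ => ?_
        rw [ENNReal.ofReal_mul (by positivity), ENNReal.ofReal_pow hq0,
          ENNReal.ofReal_sub _ hp0.le]
        simp
    _ ≤ _ := ENNReal.ofReal_le_ofReal (sum_choose_mul_choose_mul_pow_le n hq0 hq1 hsmall)

/-- **A `p`-robust random 0–1 matrix has a perfect matching with high probability**:
let `μ` be the joint law of a random `n×n` 0–1 matrix (encoded as
`ω : Fin n → Fin n → Bool`) which is `p`-robust: every entry equals `1` with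
(conditional) probability at least `p`, given any positive-probability assignment of
values to any collection of entries preceding it in row-major order (and in particular
unconditionally, taking the empty collection).  Then
`Pr(∃ permutation σ with ξ_{σ(j),j} = 1 for all j) ≥ 1 − (n+1)³·(1−p)^{⌊n/2⌋}`. -/
theorem probust_matrix_pm_probability
    (n : ℕ) (hn : 1 ≤ n) (p : ℝ) (hp0 : 0 < p) (hp1 : p < 1)
    (μ : Measure (Fin n → Fin n → Bool)) [IsProbabilityMeasure μ]
    -- `μ` is `p`-robust (row-major precedence)
    (hrob : ∀ (i j : Fin n) (T : Finset (Fin n × Fin n)),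
      (∀ q ∈ T, q.1 < i ∨ (q.1 = i ∧ q.2 < j)) →
      ∀ a : Fin n × Fin n → Bool,
        μ {ω | ∀ q ∈ T, ω q.1 q.2 = a q} ≠ 0 →
        ENNReal.ofReal p * μ {ω | ∀ q ∈ T, ω q.1 q.2 = a q} ≤
          μ ({ω | ω i j = true} ∩ {ω | ∀ q ∈ T, ω q.1 q.2 = a q})) :
    ENNReal.ofReal (1 - ((n : ℝ) + 1) ^ 3 * (1 - p) ^ (n / 2)) ≤
      μ {ω | ∃ σ : Equiv.Perm (Fin n), ∀ j, ω (σ j) j = true} :=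
  probust_matrix_pm_probability_general n p hp0 hp1 μ hrob
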